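/- The max energy gap equals the minimum energy-not-served: for any reference P^r and fleet with capacity curve Ω, define Φ = sup_{p≥0} max{E_{P^r}(p) − Ω(p), 0}. Then the minimum over feasible output signals g (those with g ≤ P^r pointwise and E_g(p) ≤ Ω(p) for all p) of Γ(g, P^r) equals Φ, and the minimum is attained by the capped signal P̄^r(t) = min{P^r(t), p̃} where p̃ satisfies E_{P^r}(p̃) = Φ. -/

import Mathlib

/-!
Write `E_f(p) = ∫ (f - p)⁺`. For `p ≤ p̃`, capping `Pʳ` at `p̃` removes exactly the energy above
`p̃`, so `E_{P̄ʳ}(p) = E_{Pʳ}(p) - E_{Pʳ}(p̃) = E_{Pʳ}(p) - Φ ≤ Ω(p)` by the definition of `Φ`; for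
`p ≥ p̃` it vanishes. Conversely, since `x ↦ (x - p)⁺` is monotone and 1-Lipschitz, every signal `g`
loses at most `∫ (Pʳ - g)⁺` of energy above any level, so a feasible `g` has
`E_{Pʳ}(p) - Ω(p) ≤ E_{Pʳ}(p) - E_g(p) ≤ Γ(g, Pʳ)` for all `p ≥ 0`.
-/

open MeasureTheory

lemma max_min_sub_zero_eq_sub {x c p : ℝ} (hpc : p ≤ c) :
    max (min x c - p) 0 = max (x - p) 0 - max (x - c) 0 := by
  simp only [max_def, min_def]
  split_ifs <;> linarith

lemma max_sub_min_zero_eq (x c : ℝ) : max (x - min x c) 0 = max (x - c) 0 := by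
  simp only [max_def, min_def]
  split_ifs <;> linarith

lemma max_sub_zero_sub_le (x y p : ℝ) : max (x - p) 0 - max (y - p) 0 ≤ max (x - y) 0 := by
  simp only [max_def]
  split_ifs <;> linarith

section Energy

variable {α : Type*} [MeasurableSpace α] {μ : Measure α} {f g : α → ℝ} {p c : ℝ}

/-- The paper's `E_f(p)`. -/
noncomputable def energyAbove (μ : Measure α) (f : α → ℝ) (p : ℝ) : ℝ :=
  ∫ t, max (f t - p) 0 ∂μ

/-- The paper's `Γ(g, f)`. -/
noncomputable def energyNotServed (μ : Measure α) (g f : α → ℝ) : ℝ :=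
  ∫ t, max (f t - g t) 0 ∂μ

lemma MeasureTheory.Integrable.max_sub_const_zero (hf : Integrable f μ) (hp : 0 ≤ p) :
    Integrable (fun t => max (f t - p) 0) μ := by
  refine hf.abs.mono' (by fun_prop) (ae_of_all _ fun t => ?_)
  rw [Real.norm_eq_abs, abs_of_nonneg (le_max_right _ _)]
  exact max_le (by linarith [le_abs_self (f t)]) (abs_nonneg _)

lemma energyAbove_min_eq_sub (hf : Integrable f μ) (hp : 0 ≤ p) (hpc : p ≤ c) :
    energyAbove μ (fun t => min (f t) c) p = energyAbove μ f p - energyAbove μ f c := by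
  rw [energyAbove, energyAbove, energyAbove,
    ← integral_sub (hf.max_sub_const_zero hp) (hf.max_sub_const_zero (hp.trans hpc))]
  simp only [max_min_sub_zero_eq_sub hpc]

lemma energyAbove_min_of_le (hcp : c ≤ p) : energyAbove μ (fun t => min (f t) c) p = 0 := by
  refine integral_eq_zero_of_ae (ae_of_all _ fun t => ?_)
  simp [(min_le_right (f t) c).trans hcp]

lemma energyNotServed_min_eq (f : α → ℝ) (c : ℝ) :
    energyNotServed μ (fun t => min (f t) c) f = energyAbove μ f c := by
  simp only [energyNotServed, energyAbove, max_sub_min_zero_eq]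

lemma energyAbove_sub_le_energyNotServed (hf : Integrable f μ) (hg : Integrable g μ)
    (hp : 0 ≤ p) : energyAbove μ f p - energyAbove μ g p ≤ energyNotServed μ g f := by
  rw [energyAbove, energyAbove, ← integral_sub (hf.max_sub_const_zero hp)
    (hg.max_sub_const_zero hp)]
  exact integral_mono ((hf.max_sub_const_zero hp).sub (hg.max_sub_const_zero hp))
    (hf.sub hg).pos_part fun t => max_sub_zero_sub_le _ _ _

lemma energyAbove_sub_le_energyNotServed_of_feasible {Ω : ℝ → ℝ} (hf : Integrable f μ)
    (hg : Integrable g μ) (hgΩ : ∀ p, 0 ≤ p → energyAbove μ g p ≤ Ω p) (hp : 0 ≤ p) :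
    energyAbove μ f p - Ω p ≤ energyNotServed μ g f := by
  linarith [hgΩ p hp, energyAbove_sub_le_energyNotServed hf hg hp]

lemma energyAbove_min_le_of_gap_le {Ω : ℝ → ℝ} (hf : Integrable f μ)
    (hΩ : ∀ p, 0 ≤ p → 0 ≤ Ω p) (hgap : ∀ p, 0 ≤ p → energyAbove μ f p - Ω p ≤ energyAbove μ f c)
    (hp : 0 ≤ p) : energyAbove μ (fun t => min (f t) c) p ≤ Ω p := by
  rcases le_total p c with hpc | hcp
  · rw [energyAbove_min_eq_sub hf hp hpc]
    linarith [hgap p hp]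
  · rw [energyAbove_min_of_le hcp]
    exact hΩ p hp

end Energy

theorem max_energy_gap_eq_min_ens_general (Pr Ω : ℝ → ℝ)
    (hPint : IntegrableOn Pr (Set.Ioi 0))
    (hΩnonneg : ∀ p, 0 ≤ p → 0 ≤ Ω p)
    (Φ : ℝ)
    (hΦ : IsLUB {e : ℝ | ∃ p : ℝ, 0 ≤ p ∧
      e = max ((∫ t in Set.Ioi (0 : ℝ), max (Pr t - p) 0) - Ω p) 0} Φ)
    (ptilde : ℝ)
    (hcap : (∫ t in Set.Ioi (0 : ℝ), max (Pr t - ptilde) 0) = Φ) :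
    ((∀ t, min (Pr t) ptilde ≤ Pr t) ∧
      ∀ p : ℝ, 0 ≤ p →
        (∫ t in Set.Ioi (0 : ℝ), max (min (Pr t) ptilde - p) 0) ≤ Ω p) ∧
    (∫ t in Set.Ioi (0 : ℝ), max (Pr t - min (Pr t) ptilde) 0) = Φ ∧
    (∀ g : ℝ → ℝ, Measurable g → (∀ t, 0 ≤ g t) → (∀ t, g t ≤ Pr t) →
      IntegrableOn g (Set.Ioi 0) →
      (∀ p : ℝ, 0 ≤ p → (∫ t in Set.Ioi (0 : ℝ), max (g t - p) 0) ≤ Ω p) →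
      Φ ≤ ∫ t in Set.Ioi (0 : ℝ), max (Pr t - g t) 0) := by
  have hgap (p : ℝ) (hp : 0 ≤ p) : energyAbove _ Pr p - Ω p ≤ Φ :=
    (le_max_left _ _).trans (hΦ.1 ⟨p, hp, rfl⟩)
  refine ⟨⟨fun t => min_le_left _ _, fun p hp => ?_⟩, ?_, ?_⟩
  · exact energyAbove_min_le_of_gap_le hPint hΩnonneg
      (fun p hp => (hgap p hp).trans_eq hcap.symm) hp
  · exact (energyNotServed_min_eq Pr ptilde).trans hcap
  · intro g _ _ _ hgint hgΩ
    refine hΦ.2 ?_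
    rintro e ⟨p, hp, rfl⟩
    exact max_le (energyAbove_sub_le_energyNotServed_of_feasible hPint hgint hgΩ hp)
      (integral_nonneg fun t => le_max_right _ _)

/-- The max energy gap equals the minimum energy-not-served: with
`Φ = sup_{p ≥ 0} max {E_{Pʳ}(p) − Ω(p), 0}` and a cap level `p̃ ≥ 0` with
`E_{Pʳ}(p̃) = Φ`, the capped signal `P̄ʳ = min (Pʳ ·) p̃` is feasible, its
energy-not-served equals `Φ`, and every feasible output `g` (i.e. `g ≤ Pʳ`
pointwise with `E_g` dominated by the capacity curve `Ω`) incurs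
energy-not-served at least `Φ`. -/
theorem max_energy_gap_eq_min_ens (Pr Ω : ℝ → ℝ)
    (hPmeas : Measurable Pr) (hPnonneg : ∀ t, 0 ≤ Pr t)
    (hPint : IntegrableOn Pr (Set.Ioi 0))
    (hΩnonneg : ∀ p, 0 ≤ p → 0 ≤ Ω p)
    (hΩconv : ConvexOn ℝ (Set.Ici (0 : ℝ)) Ω)
    (hΩanti : AntitoneOn Ω (Set.Ici (0 : ℝ)))
    (Φ : ℝ)
    (hΦ : IsLUB {e : ℝ | ∃ p : ℝ, 0 ≤ p ∧
      e = max ((∫ t in Set.Ioi (0 : ℝ), max (Pr t - p) 0) - Ω p) 0} Φ)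
    (ptilde : ℝ) (hpt : 0 ≤ ptilde)
    (hcap : (∫ t in Set.Ioi (0 : ℝ), max (Pr t - ptilde) 0) = Φ) :
    ((∀ t, min (Pr t) ptilde ≤ Pr t) ∧
      ∀ p : ℝ, 0 ≤ p →
        (∫ t in Set.Ioi (0 : ℝ), max (min (Pr t) ptilde - p) 0) ≤ Ω p) ∧
    (∫ t in Set.Ioi (0 : ℝ), max (Pr t - min (Pr t) ptilde) 0) = Φ ∧
    (∀ g : ℝ → ℝ, Measurable g → (∀ t, 0 ≤ g t) → (∀ t, g t ≤ Pr t) →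
      IntegrableOn g (Set.Ioi 0) →
      (∀ p : ℝ, 0 ≤ p → (∫ t in Set.Ioi (0 : ℝ), max (g t - p) 0) ≤ Ω p) →
      Φ ≤ ∫ t in Set.Ioi (0 : ℝ), max (Pr t - g t) 0) :=
  max_energy_gap_eq_min_ens_general Pr Ω hPint hΩnonneg Φ hΦ ptilde hcap
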